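/- Let ζ = e^{πi/8} and ζ' = e^{3πi/8}, and let M = diag(1, ζ, −1, 1, ζ, −1, 1, ζ, −1, ζ) and M' = diag(1, ζ', −1, 1, ζ', −1, 1, ζ', −1, ζ') be 10×10 complex diagonal matrices. For every positive integer m with m ≡ 2 (mod 4), one has |Tr(M^m)| ≠ |Tr((M')^m)|. -/

import Mathlib

open Matrix Complex

noncomputable def zetaI : ℂ := Complex.exp (Real.pi * Complex.I / 8)

noncomputable def zetaS : ℂ := Complex.exp (3 * Real.pi * Complex.I / 8)

noncomputable def Mgenus2 : Matrix (Fin 10) (Fin 10) ℂ :=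
  Matrix.diagonal ![1, zetaI, -1, 1, zetaI, -1, 1, zetaI, -1, zetaI]

noncomputable def Mgenus2' : Matrix (Fin 10) (Fin 10) ℂ :=
  Matrix.diagonal ![1, zetaS, -1, 1, zetaS, -1, 1, zetaS, -1, zetaS]

/-!
For even `m` the traces are `6 + 4 w` and `6 + 4 w ^ 3` with `w = ζ ^ m`, since `ζ' = ζ ^ 3`.
When `m ≡ 2 (mod 4)`, `w ^ 4 = ζ ^ (4m) = -1`, so `w` lies on the unit circle and
`w ^ 3 = -w⁻¹ = -conj w`; hence `|6 + 4 w ^ 3| = |6 - 4 w|`. Finally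
`|6 + 4 w|² - |6 - 4 w|² = 96 Re w`, and `Re w ≠ 0` because `±i` are not roots of `w ^ 4 = -1`.
-/

open scoped ComplexConjugate

namespace Complex

variable {w : ℂ}

theorem mul_conj_eq_one_of_pow_four_eq_neg_one (hw : w ^ 4 = -1) : w * conj w = 1 := by
  have hnorm : ‖w‖ = 1 := by
    have h4 : ‖w‖ ^ 4 = 1 := by rw [← norm_pow, hw, norm_neg, norm_one]
    exact (pow_eq_one_iff_of_nonneg (norm_nonneg w) four_ne_zero).1 h4
  rw [mul_conj, normSq_eq_norm_sq, hnorm]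
  norm_num

theorem pow_three_eq_neg_conj_of_pow_four_eq_neg_one (hw : w ^ 4 = -1) : w ^ 3 = -conj w := by
  calc w ^ 3 = w ^ 3 * (w * conj w) := by rw [mul_conj_eq_one_of_pow_four_eq_neg_one hw, mul_one]
    _ = w ^ 4 * conj w := by ring
    _ = -conj w := by rw [hw, neg_one_mul]

theorem re_ne_zero_of_pow_four_eq_neg_one (hw : w ^ 4 = -1) : w.re ≠ 0 := by
  intro hre
  have hconj : conj w = -w := by
    apply Complex.ext <;> simp [hre]
  have hsq : w ^ 2 = 1 := by
    have h3 : w ^ 3 = w := by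
      rw [pow_three_eq_neg_conj_of_pow_four_eq_neg_one hw, hconj, neg_neg]
    have hw0 : w ≠ 0 := by rintro rfl; norm_num at hw
    have : w * (w ^ 2 - 1) = 0 := by linear_combination h3
    simpa [hw0, sub_eq_zero] using this
  have : w ^ 4 = 1 := by rw [show w ^ 4 = (w ^ 2) ^ 2 by ring, hsq, one_pow]
  rw [hw] at this
  norm_num at this

theorem normSq_add_mul_sub_normSq_sub_mul (a b : ℝ) (z : ℂ) :
    normSq (a + b * z) - normSq (a - b * z) = 4 * a * b * z.re := by
  simp only [normSq_apply, add_re, add_im, sub_re, sub_im, mul_re, mul_im, ofReal_re,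
    ofReal_im]
  ring

theorem norm_add_mul_ne_norm_add_mul_pow_three {a b : ℝ} (ha : a ≠ 0) (hb : b ≠ 0)
    (hw : w ^ 4 = -1) : ‖(a : ℂ) + b * w‖ ≠ ‖(a : ℂ) + b * w ^ 3‖ := by
  intro h
  have hconj : ‖(a : ℂ) + b * w ^ 3‖ = ‖(a : ℂ) - b * w‖ := by
    rw [pow_three_eq_neg_conj_of_pow_four_eq_neg_one hw, ← norm_conj]
    simp [sub_eq_add_neg]
  have hsq : normSq (a + b * w) - normSq (a - b * w) = 0 := by
    rw [normSq_eq_norm_sq, normSq_eq_norm_sq, h, hconj, sub_self]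
  rw [normSq_add_mul_sub_normSq_sub_mul] at hsq
  exact re_ne_zero_of_pow_four_eq_neg_one hw (by simpa [ha, hb] using hsq)

end Complex

theorem zetaI_pow_eight : zetaI ^ 8 = -1 := by
  rw [zetaI, ← Complex.exp_nat_mul]
  convert Complex.exp_pi_mul_I using 2
  push_cast
  ring

theorem zetaS_eq_zetaI_pow_three : zetaS = zetaI ^ 3 := by
  rw [zetaS, zetaI, ← Complex.exp_nat_mul]
  congr 1
  push_cast
  ring

theorem zetaI_pow_pow_four {m : ℕ} (hm : m % 4 = 2) : (zetaI ^ m) ^ 4 = -1 := by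
  obtain ⟨k, rfl⟩ : ∃ k, m = 4 * k + 2 := ⟨m / 4, by omega⟩
  rw [← pow_mul, show (4 * k + 2) * 4 = 8 * (2 * k + 1) by ring, pow_mul, zetaI_pow_eight]
  exact Odd.neg_one_pow ⟨k, rfl⟩

theorem trace_diagonal_pow_of_even (z : ℂ) {m : ℕ} (hm : Even m) :
    trace ((diagonal ![1, z, -1, 1, z, -1, 1, z, -1, z] : Matrix (Fin 10) (Fin 10) ℂ) ^ m) =
      6 + 4 * z ^ m := by
  rw [diagonal_pow, trace_diagonal]
  simp only [Pi.pow_apply, Fin.sum_univ_succ, cons_val_zero, cons_val_succ, one_pow,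
    hm.neg_one_pow, Finset.univ_unique, Fin.default_eq_zero, cons_val_fin_one, Finset.sum_const,
    Finset.card_singleton, one_smul]
  ring

theorem abs_trace_genus2_ne_general (m : ℕ) (hmod : m % 4 = 2) :
    ‖Matrix.trace (Mgenus2 ^ m)‖ ≠
      ‖Matrix.trace (Mgenus2' ^ m)‖ := by
  have hm : Even m := Nat.even_iff.2 (by omega)
  rw [Mgenus2, Mgenus2', trace_diagonal_pow_of_even _ hm, trace_diagonal_pow_of_even _ hm,
    zetaS_eq_zetaI_pow_three, pow_right_comm]
  exact_mod_cast Complex.norm_add_mul_ne_norm_add_mul_pow_three (a := 6) (b := 4)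
    (by norm_num) (by norm_num) (zetaI_pow_pow_four hmod)

theorem abs_trace_genus2_ne (m : ℕ) (hm : 0 < m) (hmod : m % 4 = 2) :
    ‖Matrix.trace (Mgenus2 ^ m)‖ ≠
      ‖Matrix.trace (Mgenus2' ^ m)‖ :=
  abs_trace_genus2_ne_general m hmod
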